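/- arXiv:math/0512029 — 2 statements merged into one kernel-verified Lean document; each statement's English description precedes it below -/
import Mathlib

section
/- Let p ≥ 0 and let (a_n)_{n≥0} be complex numbers such that the sequence f_n = n^p a_n (n = 0,1,2,…) satisfies the Hausdorff condition. Then the power series Σ_{n=0}^∞ a_n z^n converges for every complex z with |z| < 1, uniformly on compact subsets of the open unit disk, and the function f(z) = (1/(2π)) Σ_{n=0}^∞ a_n z^n is holomorphic on the open unit disk D_0 = {z ∈ ℂ : |z| < 1}. -/
open MeasureTheory Filter Finset Complex

/-- Finite-difference operator: `Δ^k f_j = ∑_{m=0}^k (-1)^m C(k,m) f_{j+k-m}`. -/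
noncomputable def fdiff (f : ℕ → ℂ) (k j : ℕ) : ℂ :=
  ∑ m ∈ Finset.range (k + 1), (-1 : ℂ) ^ m * (k.choose m : ℂ) * f (j + k - m)

/-- Hausdorff condition on a sequence of complex numbers. -/
def HausdorffCond (f : ℕ → ℂ) : Prop :=
  ∃ M : ℝ, 0 < M ∧ ∃ ε : ℝ, 0 < ε ∧ ∀ n : ℕ,
    ((n : ℝ) + 1) ^ ((1 : ℝ) + ε) *
      ∑ i ∈ Finset.range (n + 1),
        ((n.choose i : ℝ)) ^ ((2 : ℝ) + ε) * ‖fdiff f i (n - i)‖ ^ ((2 : ℝ) + ε) < M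

/-- Pollaczek polynomials `P_0 = 1`, `P_1 = 2x`, `(m+1)P_{m+1} = 2x P_m - m P_{m-1}`. -/
noncomputable def pollaczek : ℕ → ℂ → ℂ
  | 0, _ => 1
  | 1, x => 2 * x
  | (m + 2), x => (2 * x * pollaczek (m + 1) x - ((m : ℂ) + 1) * pollaczek m x) / ((m : ℂ) + 2)

/-- Laguerre polynomials `L_0 = 1`, `L_1 = 1 - x`, `(m+1)L_{m+1} = (2m+1-x)L_m - m L_{m-1}`. -/
noncomputable def laguerre : ℕ → ℝ → ℝ
  | 0, _ => 1
  | 1, x => 1 - x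
  | (m + 2), x =>
      ((2 * ((m : ℝ) + 1) + 1 - x) * laguerre (m + 1) x - ((m : ℝ) + 1) * laguerre m x) /
        ((m : ℝ) + 2)

/-- Basis functions `φ_m(x) = √2 ⬝ i^m ⬝ L_m(2/x) ⬝ e^{-1/x} / x`. -/
noncomputable def phi (m : ℕ) (x : ℝ) : ℂ :=
  (Real.sqrt 2 : ℂ) * Complex.I ^ m * (laguerre m (2 / x) : ℂ) * (Real.exp (-(1 / x)) : ℂ) / (x : ℂ)

/-- Exact expansion coefficients `c_m = √2 ∑_{n=0}^∞ ((-1)^n/n!) a_n P_m(-i(n+1/2))`. -/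
noncomputable def cCoef (a : ℕ → ℂ) (m : ℕ) : ℂ :=
  (Real.sqrt 2 : ℂ) *
    ∑' n : ℕ, ((-1 : ℂ) ^ n / (n.factorial : ℂ)) * a n *
      pollaczek m (-Complex.I * ((n : ℂ) + 1 / 2))

/-- Truncated noisy coefficients `c_m^{(ε,N)} = √2 ∑_{n=0}^N ((-1)^n/n!) a_n^{(ε)} P_m(-i(n+1/2))`. -/
noncomputable def cNoisy (a : ℕ → ℂ) (N m : ℕ) : ℂ :=
  (Real.sqrt 2 : ℂ) *
    ∑ n ∈ Finset.range (N + 1), ((-1 : ℂ) ^ n / (n.factorial : ℂ)) * a n *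
      pollaczek m (-Complex.I * ((n : ℂ) + 1 / 2))

/-- The weight function `w(x) = (1/π) Γ(1/2 + ix) Γ(1/2 - ix)`. -/
noncomputable def wPol (x : ℝ) : ℂ :=
  (1 / (Real.pi : ℂ)) * Complex.Gamma (1 / 2 + Complex.I * x) * Complex.Gamma (1 / 2 - Complex.I * x)

/-- Pochhammer symbol `(a)_k = a (a+1) ⋯ (a+k-1)`. -/
noncomputable def poch (a : ℂ) (k : ℕ) : ℂ :=
  ∏ j ∈ Finset.range k, (a + (j : ℂ))

/-!
The `i = 0` term of the Hausdorff sum is `‖f n‖ ^ (2 + ε)`, so the condition alone bounds `f`;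
since `n ^ p ≥ 1` for `n ≥ 1`, the coefficients `a n` are then bounded too. Bounded coefficients
make the series dominated by a geometric series on every disc `‖z‖ ≤ r < 1`, which gives
convergence uniformly on compact subsets of the unit disc, and holomorphy follows because the
partial sums are polynomials converging locally uniformly.
-/

lemma fdiff_zero (f : ℕ → ℂ) (j : ℕ) : fdiff f 0 j = f j := by
  simp [fdiff]

lemma HausdorffCond.exists_norm_le {f : ℕ → ℂ} (hf : HausdorffCond f) :
    ∃ C, ∀ n, ‖f n‖ ≤ C := by
  obtain ⟨M, hM, ε, hε, hbound⟩ := hf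
  have hq : (0 : ℝ) < 2 + ε := by linarith
  refine ⟨M ^ (2 + ε)⁻¹, fun n => ?_⟩
  have hterm : ‖f n‖ ^ (2 + ε) ≤
      ∑ i ∈ range (n + 1), (n.choose i : ℝ) ^ (2 + ε) * ‖fdiff f i (n - i)‖ ^ (2 + ε) := by
    simpa [fdiff_zero] using single_le_sum
      (f := fun i => (n.choose i : ℝ) ^ (2 + ε) * ‖fdiff f i (n - i)‖ ^ (2 + ε))
      (fun i _ => by positivity) (mem_range.2 n.succ_pos)
  have hweight : 1 ≤ ((n : ℝ) + 1) ^ (1 + ε) := Real.one_le_rpow (by linarith) (by linarith)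
  rw [Real.le_rpow_inv_iff_of_pos (norm_nonneg _) hM.le hq]
  nlinarith [hbound n, Real.rpow_nonneg (norm_nonneg (f n)) (2 + ε)]

lemma exists_norm_le_of_norm_rpow_mul_le {a : ℕ → ℂ} {p C : ℝ} (hp : 0 ≤ p)
    (h : ∀ n : ℕ, ‖(((n : ℝ) ^ p : ℝ) : ℂ) * a n‖ ≤ C) : ∃ B, ∀ n, ‖a n‖ ≤ B := by
  refine ⟨max C ‖a 0‖, fun n => ?_⟩
  rcases n.eq_zero_or_pos with rfl | hn
  · exact le_max_right _ _
  have hpow : 1 ≤ (n : ℝ) ^ p := Real.one_le_rpow (by exact_mod_cast hn) hp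
  have hn := h n
  rw [norm_mul, Complex.norm_real, Real.norm_of_nonneg (by positivity)] at hn
  exact le_max_of_le_left (by nlinarith [norm_nonneg (a n)])

section BoundedCoefficients

variable {𝕜 : Type*} [NontriviallyNormedField 𝕜] [CompleteSpace 𝕜] {a : ℕ → 𝕜} {B : ℝ}

lemma summable_mul_pow_of_norm_le (hB : ∀ n, ‖a n‖ ≤ B) {z : 𝕜} (hz : ‖z‖ < 1) :
    Summable fun n => a n * z ^ n :=
  .of_norm_bounded ((summable_geometric_of_lt_one (norm_nonneg z) hz).mul_left B) fun n => by
    rw [norm_mul, norm_pow]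
    exact mul_le_mul_of_nonneg_right (hB n) (by positivity)

lemma tendstoUniformlyOn_sum_mul_pow_of_norm_le (hB : ∀ n, ‖a n‖ ≤ B) {s : Set 𝕜} {r : ℝ}
    (hr0 : 0 ≤ r) (hr1 : r < 1) (hs : ∀ z ∈ s, ‖z‖ ≤ r) :
    TendstoUniformlyOn (fun N z => ∑ n ∈ range N, a n * z ^ n) (fun z => ∑' n, a n * z ^ n)
      atTop s :=
  tendstoUniformlyOn_tsum_nat ((summable_geometric_of_lt_one hr0 hr1).mul_left B)
    fun n z hz => by
      rw [norm_mul, norm_pow]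
      exact mul_le_mul (hB n) (pow_le_pow_left₀ (norm_nonneg z) (hs z hz) n) (by positivity)
        ((norm_nonneg _).trans (hB n))

lemma tendstoUniformlyOn_sum_mul_pow_of_isCompact (hB : ∀ n, ‖a n‖ ≤ B) [ProperSpace 𝕜]
    {K : Set 𝕜} (hK : IsCompact K) (hK1 : K ⊆ Metric.ball 0 1) :
    TendstoUniformlyOn (fun N z => ∑ n ∈ range N, a n * z ^ n) (fun z => ∑' n, a n * z ^ n)
      atTop K := by
  obtain ⟨r, hr1, hKr⟩ := exists_lt_subset_ball hK.isClosed hK1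
  refine tendstoUniformlyOn_sum_mul_pow_of_norm_le hB (le_max_right r 0)
    (max_lt hr1 one_pos) fun z hz => ?_
  simpa using (mem_ball_zero_iff.1 (hKr hz)).le.trans (le_max_left r 0)

end BoundedCoefficients

lemma differentiableOn_tsum_mul_pow_of_norm_le {a : ℕ → ℂ} {B : ℝ} (hB : ∀ n, ‖a n‖ ≤ B) :
    DifferentiableOn ℂ (fun z => ∑' n, a n * z ^ n) (Metric.ball 0 1) :=
  TendstoLocallyUniformlyOn.differentiableOn
    ((tendstoLocallyUniformlyOn_iff_forall_isCompact Metric.isOpen_ball).2 fun _ hK1 hK =>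
      tendstoUniformlyOn_sum_mul_pow_of_isCompact hB hK hK1)
    (Eventually.of_forall fun N => by fun_prop) Metric.isOpen_ball

/-- If f_n = n^p a_n satisfies the Hausdorff condition (p ≥ 0), then the power
series Σ a_n z^n converges on the open unit disk, uniformly on compact subsets, and
f(z) = (1/(2π)) Σ a_n z^n is holomorphic there. -/
theorem statement0 (p : ℝ) (hp : 0 ≤ p) (a : ℕ → ℂ)
    (ha : HausdorffCond (fun n => ((((n : ℝ) ^ p : ℝ)) : ℂ) * a n)) :
    (∀ z : ℂ, ‖z‖ < 1 → Summable fun n : ℕ => a n * z ^ n) ∧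
    (∀ K : Set ℂ, K ⊆ Metric.ball (0 : ℂ) 1 → IsCompact K →
      TendstoUniformlyOn
        (fun (N : ℕ) (z : ℂ) => (1 / (2 * (Real.pi : ℂ))) * ∑ n ∈ Finset.range N, a n * z ^ n)
        (fun z : ℂ => (1 / (2 * (Real.pi : ℂ))) * ∑' n : ℕ, a n * z ^ n) Filter.atTop K) ∧
    DifferentiableOn ℂ (fun z : ℂ => (1 / (2 * (Real.pi : ℂ))) * ∑' n : ℕ, a n * z ^ n)
      (Metric.ball (0 : ℂ) 1) := by
  obtain ⟨C, hC⟩ := ha.exists_norm_le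
  obtain ⟨B, hB⟩ := exists_norm_le_of_norm_rpow_mul_le hp hC
  refine ⟨fun z hz => summable_mul_pow_of_norm_le hB hz, fun K hK1 hK => ?_,
    (differentiableOn_tsum_mul_pow_of_norm_le hB).const_mul _⟩
  exact (uniformContinuous_const_smul (1 / (2 * (Real.pi : ℂ)))).comp_tendstoUniformlyOn
    (tendstoUniformlyOn_sum_mul_pow_of_isCompact hB hK hK1)
end

section
/- Let N ∈ ℕ and let a_0^{(ε)}, …, a_N^{(ε)} be complex numbers with a_N^{(ε)} ≠ 0, and set c_m^{(ε,N)} = √2 Σ_{n=0}^{N} ((−1)^n / n!) a_n^{(ε)} P_m(−i(n+1/2)) for m ≥ 0. Then lim_{m→∞} |c_m^{(ε,N)}| · (N!)² / (√2 · |a_N^{(ε)}| · (2m)^N) = 1, i.e., |c_m^{(ε,N)}| is asymptotic to (√2 |a_N^{(ε)}| / (N!)²) (2m)^N as m → ∞. -/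
open MeasureTheory Filter Finset Complex

/-!
At the points `x = -i(n + 1/2)` the Pollaczek recurrence is solved by `(-i)^m D(n, m)`, where
`D(n, m) = ∑_k C(n,k) C(m,k) 2^k` is the Delannoy number: `D(n, ·)` satisfies
`(m+2) D(n, m+2) = (2n+1) D(n, m+1) + (m+1) D(n, m)`, the same three-term recurrence up to the
factor `-i` per step. Hence `c_m = √2 (-i)^m ∑_{n ≤ N} ((-1)^n / n!) a_n D(n, m)`. Since
`C(m,k) ~ m^k / k!`, `D(n, m) ~ 2^n m^n / n!` as `m → ∞`, so the term `n = N` dominates the sum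
and `|c_m| ~ √2 |a_N| 2^N m^N / (N!)^2`.
-/

open Asymptotics

def delannoy (n m : ℕ) : ℕ :=
  ∑ k ∈ range (n + 1), n.choose k * m.choose k * 2 ^ k

lemma delannoy_zero_right (n : ℕ) : delannoy n 0 = 1 := by
  simp [delannoy, sum_range_succ']

lemma delannoy_one_right (n : ℕ) : delannoy n 1 = 2 * n + 1 := by
  rw [delannoy, sum_range_succ', sum_eq_single 0]
  · simp [mul_comm]
  · intro k _ hk
    simp [Nat.choose_eq_zero_of_lt (show 1 < k + 1 by omega)]
  · simp

lemma add_two_mul_choose (m k : ℕ) :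
    (m + 2) * (m + 2).choose k = (m + 1).choose k + (m + 1) * m.choose k +
      k * (m + 1).choose (k - 1) + 2 * k * (m + 1).choose k := by
  cases k with
  | zero => simp only [Nat.choose_zero_right]; ring
  | succ j =>
    have h₁ := Nat.choose_succ_succ' (m + 1) j
    have h₂ := Nat.choose_succ_succ' m j
    have h₃ := Nat.add_one_mul_choose_eq (m + 1) j
    have h₄ := Nat.add_one_mul_choose_eq m j
    rw [Nat.add_sub_cancel]
    linear_combination (m + j + 3) * h₁ + (m + 1) * h₂ + h₃ + h₄

lemma sum_range_mul_choose_mul (n : ℕ) (g : ℕ → ℕ) :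
    ∑ k ∈ range (n + 1), k * n.choose k * g k =
      ∑ k ∈ range (n + 1), (n - k) * n.choose k * g (k + 1) := by
  rw [sum_range_succ', sum_range_succ]
  simp only [Nat.sub_self, zero_mul, add_zero, mul_comm (_ - _)]
  refine sum_congr rfl fun k _ => ?_
  rw [← Nat.choose_succ_right_eq]; ring

lemma delannoy_add_two (n m : ℕ) :
    (m + 2) * delannoy n (m + 2) = (2 * n + 1) * delannoy n (m + 1) + (m + 1) * delannoy n m := by
  set t : ℕ → ℕ := fun k => n.choose k * (m + 1).choose k * 2 ^ k
  set s : ℕ → ℕ := fun k => n.choose k * m.choose k * 2 ^ k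
  set g : ℕ → ℕ := fun k => 2 ^ k * (m + 1).choose (k - 1)
  calc (m + 2) * delannoy n (m + 2)
      = ∑ k ∈ range (n + 1), ((1 + 2 * k) * t k + (m + 1) * s k + k * n.choose k * g k) := by
        rw [delannoy, mul_sum]
        refine sum_congr rfl fun k _ => ?_
        rw [show (m + 2) * (n.choose k * (m + 2).choose k * 2 ^ k) =
          n.choose k * ((m + 2) * (m + 2).choose k) * 2 ^ k by ring, add_two_mul_choose]
        ring
    _ = ∑ k ∈ range (n + 1),
          ((1 + 2 * k) * t k + (m + 1) * s k + (n - k) * n.choose k * g (k + 1)) := by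
        rw [sum_add_distrib, sum_range_mul_choose_mul, ← sum_add_distrib]
    _ = ∑ k ∈ range (n + 1), ((2 * n + 1) * t k + (m + 1) * s k) := by
        refine sum_congr rfl fun k hk => ?_
        obtain ⟨j, rfl⟩ := Nat.exists_eq_add_of_le (Nat.lt_succ_iff.mp (mem_range.mp hk))
        simp only [g, t, Nat.add_sub_cancel_left, Nat.add_sub_cancel]
        ring
    _ = (2 * n + 1) * delannoy n (m + 1) + (m + 1) * delannoy n m := by
        rw [sum_add_distrib, ← mul_sum, ← mul_sum]; rfl

lemma pollaczek_neg_I_mul_add_half (n : ℕ) :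
    ∀ m, pollaczek m (-I * (n + 1 / 2)) = (-I) ^ m * delannoy n m
  | 0 => by simp [pollaczek, delannoy_zero_right]
  | 1 => by rw [pollaczek, delannoy_one_right]; push_cast; ring
  | m + 2 => by
    have hrec : ((m : ℂ) + 2) * delannoy n (m + 2) =
        (2 * n + 1) * delannoy n (m + 1) + (m + 1) * delannoy n m := by
      exact_mod_cast delannoy_add_two n m
    rw [pollaczek, pollaczek_neg_I_mul_add_half n (m + 1), pollaczek_neg_I_mul_add_half n m,
      div_eq_iff (by exact_mod_cast (m + 1).succ_ne_zero), pow_succ, pow_succ]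
    linear_combination (-I) ^ m * hrec +
      (-I) ^ m * ((2 * n + 1) * delannoy n (m + 1) - (m + 2) * delannoy n (m + 2)) * I_sq

theorem Asymptotics.IsEquivalent.sum_range_succ {α β : Type*} [NormedAddCommGroup β]
    {l : Filter α} {u : ℕ → α → β} {v : α → β} {N : ℕ}
    (htop : u N ~[l] v) (hlow : ∀ n < N, u n =o[l] v) :
    (fun x => ∑ n ∈ range (N + 1), u n x) ~[l] v := by
  simp only [Finset.sum_range_succ]
  exact (IsLittleO.fun_sum fun n hn => hlow n (mem_range.mp hn)).add_isEquivalent htop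

lemma isLittleO_natCast_pow_of_lt {k n : ℕ} (h : k < n) {c : ℝ} (hc : c ≠ 0) :
    (fun m : ℕ => (m : ℝ) ^ k) =o[atTop] fun m => c * (m : ℝ) ^ n :=
  ((isLittleO_pow_pow_atTop_of_lt h).comp_tendsto tendsto_natCast_atTop_atTop).const_mul_right hc

lemma isEquivalent_delannoy (n : ℕ) :
    (fun m => (delannoy n m : ℝ)) ~[atTop] fun m => 2 ^ n / n.factorial * (m : ℝ) ^ n := by
  have hc : (2 : ℝ) ^ n / n.factorial ≠ 0 := by positivity
  simp only [delannoy, Nat.cast_sum, Nat.cast_mul, Nat.cast_pow, Nat.cast_ofNat]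
  refine IsEquivalent.sum_range_succ ?_ fun k hk => ?_
  · have := (isEquivalent_choose n).mul (IsEquivalent.refl (u := fun _ => (2 : ℝ) ^ n))
    refine (this.congr_left ?_).congr_right ?_ <;> refine .of_eq (funext fun m => ?_)
    · simp [Nat.choose_self, mul_comm]
    · simp only [Pi.mul_apply]; ring
  · have hlow := (isTheta_choose k).isBigO.trans_isLittleO (isLittleO_natCast_pow_of_lt hk hc)
    exact (hlow.const_mul_left ((n.choose k : ℝ) * 2 ^ k)).congr_left fun m => by ring

lemma isEquivalent_sum_delannoy_smul {E : Type*} [NormedAddCommGroup E] [NormedSpace ℝ E]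
    {N : ℕ} (c : ℕ → E) (hc : c N ≠ 0) :
    (fun m => ∑ n ∈ range (N + 1), (delannoy n m : ℝ) • c n) ~[atTop]
      fun m => (2 ^ N / N.factorial * (m : ℝ) ^ N) • c N := by
  refine IsEquivalent.sum_range_succ ((isEquivalent_delannoy N).smul IsEquivalent.refl)
    fun n hn => IsLittleO.smul_isBigO ?_ (isBigO_const_const (c n) hc atTop)
  exact (isEquivalent_delannoy n).isBigO.trans_isLittleO
    ((isLittleO_natCast_pow_of_lt hn (by positivity)).const_mul_left _)

lemma cNoisy_eq_sum_delannoy_smul (a : ℕ → ℂ) (N m : ℕ) :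
    cNoisy a N m = Real.sqrt 2 * (-I) ^ m *
      ∑ n ∈ range (N + 1), (delannoy n m : ℝ) • ((-1 : ℂ) ^ n / n.factorial * a n) := by
  simp only [cNoisy, pollaczek_neg_I_mul_add_half, Complex.real_smul, Complex.ofReal_natCast,
    mul_sum]
  exact Finset.sum_congr rfl fun n _ => by ring

/-- For noisy truncated coefficients with a_N ≠ 0,
|c_m^{(ε,N)}| ~ (√2 |a_N| / (N!)²) (2m)^N as m → ∞. -/
theorem statement8 (N : ℕ) (a : ℕ → ℂ) (haN : a N ≠ 0) :
    Tendsto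
      (fun m : ℕ =>
        ‖cNoisy a N m‖ * ((N.factorial : ℝ)) ^ 2 /
          (Real.sqrt 2 * ‖a N‖ * (2 * (m : ℝ)) ^ N))
      atTop (nhds 1) := by
  have hcN : (-1 : ℂ) ^ N / N.factorial * a N ≠ 0 := by simp [haN, Nat.factorial_ne_zero]
  have hequiv := isEquivalent_sum_delannoy_smul (fun n => (-1 : ℂ) ^ n / n.factorial * a n) hcN
  rw [isEquivalent_iff_tendsto_one (by
    filter_upwards [eventually_ne_atTop 0] with m hm
    simp [hm, hcN, Nat.factorial_ne_zero])] at hequiv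
  refine (norm_one (α := ℂ) ▸ hequiv.norm).congr' ?_
  filter_upwards [eventually_ne_atTop 0] with m hm
  simp only [Pi.div_apply, norm_div, norm_smul, cNoisy_eq_sum_delannoy_smul, norm_mul, norm_pow,
    norm_neg, norm_I, one_pow, Complex.norm_real, norm_one, Complex.norm_natCast,
    Real.norm_eq_abs, Nat.abs_cast, abs_two, abs_of_nonneg (Real.sqrt_nonneg 2)]
  field_simp
  ring
end
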